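/- First-order gap bounds (Lemma 9, parts 1 and 2): For every s, ‖Ṗ(s)‖ ≤ √m · ‖Ḣ(s)‖ / g(s), and ‖(Ṗ(s))~‖ ≤ √m · ‖Ṗ(s)‖ / g(s) ≤ m · ‖Ḣ(s)‖ / g(s)². -/

import Mathlib

/-!
Differentiating `H P = P H` and `P² = P` and inserting the reduced resolvents shows `Ṗ = (Ḣ)~`,
so all bounds reduce to `‖X̃‖ ≤ √m ‖X‖ / g`. For that, `X̃ v` splits into `∑ⱼ Pⱼ X R̂ⱼ v ∈ ran P`,
an orthogonal sum controlled by the gap estimate `g ‖R̂ⱼ u‖ ≤ ‖(1 - P) u‖`, and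
`∑ⱼ R̂ⱼ X Pⱼ v ∈ ker P`, controlled by Cauchy–Schwarz over the `m` terms; Pythagoras for
`v = P v + (1 - P) v` combines the two. The `Pⱼ` are pairwise orthogonal because their sum `P`
is an orthogonal projection.
-/

open scoped InnerProductSpace

theorem HasDerivAt.unique_of_eqOn {𝕜 F : Type*} [NontriviallyNormedField 𝕜]
    [NormedAddCommGroup F] [NormedSpace 𝕜 F] {f g : 𝕜 → F} {f' g' : F} {s : Set 𝕜} {x : 𝕜}
    (hf : HasDerivAt f f' x) (hg : HasDerivAt g g' x) (hs : UniqueDiffWithinAt 𝕜 s x)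
    (hx : x ∈ s) (hfg : Set.EqOn f g s) : f' = g' :=
  hs.eq_deriv _ hf.hasDerivWithinAt (hg.hasDerivWithinAt.congr_of_mem hfg hx)

section Algebra

variable {𝕜 A ι : Type*} [CommRing 𝕜] [Ring A] [Algebra 𝕜 A] [Fintype ι]

theorem sum_mul_of_pairwise_mul_eq_zero {q : ι → A}
    (horth : Pairwise fun i j => q i * q j = 0) (i : ι) (hi : IsIdempotentElem (q i)) :
    (∑ j, q j) * q i = q i := by
  classical
  rw [Finset.sum_mul, Finset.sum_eq_single i (fun j _ hji => horth hji) (by simp), hi.eq]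

theorem mul_sum_of_pairwise_mul_eq_zero {q : ι → A}
    (horth : Pairwise fun i j => q i * q j = 0) (i : ι) (hi : IsIdempotentElem (q i)) :
    q i * (∑ j, q j) = q i := by
  classical
  rw [Finset.mul_sum, Finset.sum_eq_single i (fun j _ hji => horth hji.symm) (by simp), hi.eq]

/-- `twiddle Q R X` is the paper's `X̃`. -/
def twiddle (Q R : ι → A) (X : A) : A :=
  -∑ i, (Q i * X * R i + R i * X * Q i)

theorem mul_deriv_mul_one_sub {H H' P P' Q R : A} {c : 𝕜}
    (hQH : Q * H = c • Q) (hQP : Q * P = Q)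
    (hR : (H - c • 1) * R = 1 - P) (hPR : P * R = 0)
    (hcomm : H' * P + H * P' = P' * H + P * H') :
    Q * P' * (1 - P) = -(Q * H' * R) := by
  have key : Q * P' * (H - c • 1) = -(Q * H' * (1 - P)) := by
    have := congrArg (Q * ·) hcomm
    simp only [mul_add, ← mul_assoc, hQH, hQP, smul_mul_assoc] at this
    rw [mul_sub, mul_sub, mul_one, mul_smul_comm, mul_one]
    linear_combination (norm := abel1) -this
  calc Q * P' * (1 - P) = Q * P' * (H - c • 1) * R := by rw [mul_assoc _ (H - c • 1), hR]
    _ = -(Q * H' * ((1 - P) * R)) := by rw [key, neg_mul, mul_assoc]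
    _ = -(Q * H' * R) := by rw [sub_mul, one_mul, hPR, sub_zero]

theorem one_sub_mul_deriv_mul {H H' P P' Q R : A} {c : 𝕜}
    (hHQ : H * Q = c • Q) (hPQ : P * Q = Q)
    (hR : R * (H - c • 1) = 1 - P) (hRP : R * P = 0)
    (hcomm : H' * P + H * P' = P' * H + P * H') :
    (1 - P) * P' * Q = -(R * H' * Q) := by
  open MulOpposite in
  have := mul_deriv_mul_one_sub (H := op H) (H' := op H') (P := op P) (P' := op P')
    (Q := op Q) (R := op R) (c := c) (by rw [← op_mul, hHQ, op_smul])
    (by rw [← op_mul, hPQ]) (by rw [← op_one, ← op_smul, ← op_sub, ← op_mul, hR, op_sub, op_one])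
    (by rw [← op_mul, hRP, op_zero])
    (by
      simp only [← op_mul, ← op_add]
      exact congrArg op (by linear_combination (norm := abel1) -hcomm))
  apply op_injective
  simpa only [op_mul, op_neg, op_sub, op_one, mul_assoc] using this

theorem eq_twiddle_of_commute_deriv {H H' P P' : A} {Q R : ι → A} {c : ι → 𝕜}
    (hP : P * P = P) (hPsum : P = ∑ i, Q i)
    (hHQ : ∀ i, H * Q i = c i • Q i) (hQH : ∀ i, Q i * H = c i • Q i)
    (hPQ : ∀ i, P * Q i = Q i) (hQP : ∀ i, Q i * P = Q i)
    (hRl : ∀ i, (H - c i • 1) * R i = 1 - P) (hRr : ∀ i, R i * (H - c i • 1) = 1 - P)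
    (hPR : ∀ i, P * R i = 0) (hRP : ∀ i, R i * P = 0)
    (hcomm : H' * P + H * P' = P' * H + P * H') (hidem : P' * P + P * P' = P') :
    P' = twiddle Q R H' := by
  have hPP'P : P * P' * P = 0 := by
    have h := congrArg (fun X => P * X * P) hidem
    simp only [mul_add, add_mul, ← mul_assoc, hP] at h
    simp only [mul_assoc, hP] at h
    rw [mul_assoc]
    exact add_eq_right.mp h
  have hsplit : P' = P * P' * (1 - P) + (1 - P) * P' * P := by
    rw [mul_sub, mul_one, sub_mul, sub_mul, one_mul, hPP'P, sub_zero, sub_zero, add_comm]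
    exact hidem.symm
  have hleft : P * P' * (1 - P) = ∑ i, Q i * P' * (1 - P) := by
    rw [← Finset.sum_mul, ← Finset.sum_mul, ← hPsum]
  have hright : (1 - P) * P' * P = ∑ i, (1 - P) * P' * Q i := by
    rw [← Finset.mul_sum, ← hPsum]
  rw [hsplit, hleft, hright, twiddle, ← Finset.sum_add_distrib, ← Finset.sum_neg_distrib]
  refine Finset.sum_congr rfl fun i _ => ?_
  rw [mul_deriv_mul_one_sub (hQH i) (hQP i) (hRl i) (hPR i) hcomm,
    one_sub_mul_deriv_mul (hHQ i) (hPQ i) (hRr i) (hRP i) hcomm, neg_add]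

end Algebra

section InnerProductSpace

variable {𝕜 E ι : Type*} [RCLike 𝕜] [NormedAddCommGroup E] [InnerProductSpace 𝕜 E] [Fintype ι]

theorem norm_sum_sq_eq_sum_norm_sq {w : ι → E} (hw : Pairwise fun i j => ⟪w i, w j⟫_𝕜 = 0) :
    ‖∑ i, w i‖ ^ 2 = ∑ i, ‖w i‖ ^ 2 := by
  classical
  rw [← @inner_self_eq_norm_sq 𝕜, sum_inner, map_sum]
  refine Finset.sum_congr rfl fun i _ => ?_
  rw [inner_sum, Finset.sum_eq_single i (fun j _ hji => hw hji.symm) (by simp),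
    inner_self_eq_norm_sq]

theorem LinearMap.IsSymmetric.mul_norm_le_norm_sub_smul [FiniteDimensional 𝕜 E]
    {T : E →ₗ[𝕜] E} (hT : T.IsSymmetric) {c g : ℝ} {w : E}
    (hw : ∀ (μ : ℝ) (v : E), T v = (μ : 𝕜) • v → |μ - c| < g → ⟪v, w⟫_𝕜 = 0) :
    g * ‖w‖ ≤ ‖T w - (c : 𝕜) • w‖ := by
  rcases le_or_gt g 0 with hg | hg
  · exact (mul_nonpos_of_nonpos_of_nonneg hg (norm_nonneg w)).trans (norm_nonneg _)
  let b := hT.eigenvectorBasis rfl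
  let μ := hT.eigenvalues rfl
  have hcoord : ∀ i, g * ‖⟪b i, w⟫_𝕜‖ ≤ ‖⟪b i, T w - (c : 𝕜) • w⟫_𝕜‖ := by
    intro i
    have hTb : T (b i) = (μ i : 𝕜) • b i := hT.apply_eigenvectorBasis rfl i
    have hshift : ⟪b i, T w - (c : 𝕜) • w⟫_𝕜 = ((μ i - c : ℝ) : 𝕜) * ⟪b i, w⟫_𝕜 := by
      rw [inner_sub_right, inner_smul_right, ← hT, hTb, inner_smul_left, RCLike.conj_ofReal]
      push_cast
      ring
    rw [hshift, norm_mul, RCLike.norm_ofReal]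
    rcases lt_or_ge |μ i - c| g with hlt | hge
    · simp [hw (μ i) (b i) hTb hlt]
    · exact mul_le_mul_of_nonneg_right hge (norm_nonneg _)
  refine (pow_le_pow_iff_left₀ (by positivity) (norm_nonneg _) two_ne_zero).mp ?_
  rw [mul_pow, ← b.sum_sq_norm_inner_right w, ← b.sum_sq_norm_inner_right, Finset.mul_sum]
  gcongr with i
  rw [← mul_pow]
  exact pow_le_pow_left₀ (by positivity) (hcoord i) 2

variable [CompleteSpace E] {p : E →L[𝕜] E}

theorem IsSelfAdjoint.inner_apply_left (hp : IsSelfAdjoint p) (x y : E) :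
    ⟪p x, y⟫_𝕜 = ⟪x, p y⟫_𝕜 :=
  hp.isSymmetric x y

namespace IsStarProjection

theorem inner_apply_self (hp : IsStarProjection p) (v : E) : ⟪p v, v⟫_𝕜 = ⟪p v, p v⟫_𝕜 := by
  rw [hp.isSelfAdjoint.inner_apply_left, hp.isSelfAdjoint.inner_apply_left, ← mul_apply_eq_comp,
    hp.isIdempotentElem.eq]

theorem re_inner_apply_self (hp : IsStarProjection p) (v : E) :
    RCLike.re ⟪p v, v⟫_𝕜 = ‖p v‖ ^ 2 := by
  rw [hp.inner_apply_self, inner_self_eq_norm_sq]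

theorem norm_sq_apply_add_norm_sq_sub (hp : IsStarProjection p) (v : E) :
    ‖p v‖ ^ 2 + ‖v - p v‖ ^ 2 = ‖v‖ ^ 2 := by
  have horth : ⟪p v, v - p v⟫_𝕜 = 0 := by
    rw [inner_sub_right, hp.inner_apply_self, sub_self]
  simpa [horth] using (norm_add_sq (𝕜 := 𝕜) (p v) (v - p v)).symm

theorem norm_apply_le (hp : IsStarProjection p) (v : E) : ‖p v‖ ≤ ‖v‖ := by
  have := hp.norm_sq_apply_add_norm_sq_sub v
  exact (pow_le_pow_iff_left₀ (norm_nonneg _) (norm_nonneg _) two_ne_zero).mp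
    (by nlinarith [sq_nonneg ‖v - p v‖])

theorem norm_sub_apply_le (hp : IsStarProjection p) (v : E) : ‖v - p v‖ ≤ ‖v‖ := by
  simpa using hp.one_sub.norm_apply_le v

variable {q : ι → E →L[𝕜] E}

theorem sum_norm_sq_apply (hq : ∀ i, IsStarProjection (q i))
    (hsum : IsStarProjection (∑ i, q i)) (v : E) :
    ∑ i, ‖q i v‖ ^ 2 = ‖(∑ i, q i) v‖ ^ 2 := by
  rw [← hsum.re_inner_apply_self, sum_apply, sum_inner, map_sum]
  simp only [(hq _).re_inner_apply_self]

theorem pairwise_mul_eq_zero_of_sum (hq : ∀ i, IsStarProjection (q i))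
    (hsum : IsStarProjection (∑ i, q i)) : Pairwise fun i j => q i * q j = 0 := by
  classical
  intro i j hij
  ext u
  set v := q j u
  have hv : q j v = v := by rw [← mul_apply_eq_comp, (hq j).isIdempotentElem.eq]
  have key : ‖q j v‖ ^ 2 + ‖q i v‖ ^ 2 ≤ ‖v‖ ^ 2 :=
    calc ‖q j v‖ ^ 2 + ‖q i v‖ ^ 2 = ∑ k ∈ {j, i}, ‖q k v‖ ^ 2 :=
        (Finset.sum_pair (f := fun k => ‖q k v‖ ^ 2) hij.symm).symm
      _ ≤ ∑ k, ‖q k v‖ ^ 2 :=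
        Finset.sum_le_sum_of_subset_of_nonneg (Finset.subset_univ _) fun _ _ _ => sq_nonneg _
      _ = ‖(∑ k, q k) v‖ ^ 2 := sum_norm_sq_apply hq hsum v
      _ ≤ ‖v‖ ^ 2 := pow_le_pow_left₀ (norm_nonneg _) (hsum.norm_apply_le v) 2
  rw [hv, add_le_iff_nonpos_right] at key
  rw [mul_apply_eq_comp, zero_apply, ← norm_eq_zero]
  exact pow_eq_zero_iff two_ne_zero |>.mp (le_antisymm key (sq_nonneg _))

theorem norm_sum_apply_sq_le (hq : ∀ i, IsStarProjection (q i))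
    (horth : Pairwise fun i j => q i * q j = 0) (y : ι → E) :
    ‖∑ i, q i (y i)‖ ^ 2 ≤ ∑ i, ‖y i‖ ^ 2 := by
  rw [norm_sum_sq_eq_sum_norm_sq (𝕜 := 𝕜) fun i j hij => ?_]
  · gcongr with i
    exact (hq i).norm_apply_le _
  dsimp only
  rw [(hq i).isSelfAdjoint.inner_apply_left, ← mul_apply_eq_comp, horth hij, zero_apply,
    inner_zero_right]

theorem norm_sum_map_apply_sq_le (hq : ∀ i, IsStarProjection (q i))
    (hsum : IsStarProjection (∑ i, q i)) {T : ι → E → E} {K : ℝ}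
    (hT : ∀ i u, ‖T i u‖ ≤ K * ‖u‖) (v : E) :
    ‖∑ i, T i (q i v)‖ ^ 2 ≤ Fintype.card ι * (K * ‖(∑ i, q i) v‖) ^ 2 :=
  calc ‖∑ i, T i (q i v)‖ ^ 2 ≤ (∑ i, K * ‖q i v‖) ^ 2 := by
        gcongr
        exact (norm_sum_le _ _).trans (Finset.sum_le_sum fun i _ => hT i _)
    _ ≤ Fintype.card ι * ∑ i, (K * ‖q i v‖) ^ 2 := sq_sum_le_card_mul_sum_sq
    _ = Fintype.card ι * (K * ‖(∑ i, q i) v‖) ^ 2 := by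
      simp_rw [mul_pow, ← Finset.mul_sum, sum_norm_sq_apply hq hsum]

end IsStarProjection

end InnerProductSpace

section Twiddle

variable {𝕜 E ι : Type*} [RCLike 𝕜] [NormedAddCommGroup E] [InnerProductSpace 𝕜 E]
  [CompleteSpace E] [Fintype ι]

theorem norm_twiddle_le {P X : E →L[𝕜] E} {Q R : ι → E →L[𝕜] E} {g : ℝ}
    (hP : IsStarProjection P) (hQ : ∀ i, IsStarProjection (Q i)) (hPsum : P = ∑ i, Q i)
    (hR : ∀ i u, g * ‖R i u‖ ≤ ‖u - P u‖) (hPR : ∀ i, P * R i = 0) (hg : 0 < g) :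
    ‖twiddle Q R X‖ ≤ √(Fintype.card ι) * ‖X‖ / g := by
  set K := ‖X‖ / g
  have hRX : ∀ i u, ‖X (R i u)‖ ≤ K * ‖u - P u‖ := fun i u =>
    calc ‖X (R i u)‖ ≤ ‖X‖ * ‖R i u‖ := X.le_opNorm _
      _ ≤ K * ‖u - P u‖ := by
        rw [div_mul_eq_mul_div, le_div_iff₀ hg, mul_assoc, mul_comm (‖R i u‖)]
        exact mul_le_mul_of_nonneg_left (hR i u) (norm_nonneg X)
  have hXR : ∀ i u, ‖R i (X u)‖ ≤ K * ‖u‖ := fun i u => by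
    rw [div_mul_eq_mul_div, le_div_iff₀ hg, mul_comm]
    exact (hR i _).trans ((hP.norm_sub_apply_le _).trans (X.le_opNorm u))
  have hsum : IsStarProjection (∑ i, Q i) := hPsum ▸ hP
  have horth := IsStarProjection.pairwise_mul_eq_zero_of_sum hQ hsum
  refine ContinuousLinearMap.opNorm_le_bound _ (by positivity) fun v => ?_
  set a := ∑ i, Q i (X (R i v))
  set c := ∑ i, R i (X (Q i v))
  have happ : twiddle Q R X v = -(a + c) := by
    simp [twiddle, a, c, Finset.sum_add_distrib, mul_apply_eq_comp]
  have ha : ‖a‖ ^ 2 ≤ Fintype.card ι * (K * ‖v - P v‖) ^ 2 :=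
    calc ‖a‖ ^ 2 ≤ ∑ i, ‖X (R i v)‖ ^ 2 :=
          IsStarProjection.norm_sum_apply_sq_le hQ horth _
      _ ≤ ∑ _i : ι, (K * ‖v - P v‖) ^ 2 := by gcongr with i; exact hRX i v
      _ = _ := by simp
  have hc : ‖c‖ ^ 2 ≤ Fintype.card ι * (K * ‖P v‖) ^ 2 := by
    simpa only [← hPsum] using IsStarProjection.norm_sum_map_apply_sq_le hQ hsum hXR v
  have hPa : P a = a := by
    refine (map_sum P _ _).trans (Finset.sum_congr rfl fun i _ => ?_)
    rw [← mul_apply_eq_comp, hPsum, sum_mul_of_pairwise_mul_eq_zero horth i (hQ i).isIdempotentElem]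
  have hPc : P c = 0 := by
    refine (map_sum P _ _).trans (Finset.sum_eq_zero fun i _ => ?_)
    rw [← mul_apply_eq_comp, hPR, zero_apply]
  have hac : ⟪a, c⟫_𝕜 = 0 := by
    rw [← hPa, hP.isSelfAdjoint.inner_apply_left, hPc, inner_zero_right]
  have hsq : ‖a + c‖ ^ 2 ≤ (√(Fintype.card ι) * K * ‖v‖) ^ 2 := by
    rw [@norm_add_sq 𝕜, hac, map_zero, mul_zero, add_zero, mul_pow, mul_pow,
      Real.sq_sqrt (Nat.cast_nonneg _), ← hP.norm_sq_apply_add_norm_sq_sub v]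
    nlinarith [ha, hc]
  rw [happ, norm_neg, mul_div_assoc]
  exact (pow_le_pow_iff_left₀ (norm_nonneg _) (by positivity) two_ne_zero).mp hsq

end Twiddle

/-- Spectral data of `H` at one time; `R i` is the reduced resolvent `R̂_{λᵢ}`, determined by
the last four fields. -/
structure IsGappedSpectralProjection {V ι : Type*} [NormedAddCommGroup V]
    [InnerProductSpace ℂ V] [FiniteDimensional ℂ V] [Fintype ι]
    (H P : V →L[ℂ] V) (lam : ι → ℝ) (Q R : ι → V →L[ℂ] V) (g : ℝ) : Prop where
  isSelfAdjoint : IsSelfAdjoint H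
  isStarProjection : IsStarProjection P
  isStarProjection_eigenproj (i : ι) : IsStarProjection (Q i)
  mul_eigenproj (i : ι) : H * Q i = (lam i : ℂ) • Q i
  eigenproj_apply_eq_self (i : ι) (v : V) : H v = (lam i : ℂ) • v → Q i v = v
  eq_sum_eigenproj : P = ∑ i, Q i
  gap_pos : 0 < g
  gap_le : ∀ (μ : ℝ) (v : V), v ≠ 0 → H v = (μ : ℂ) • v → (∀ i, μ ≠ lam i) →
    ∀ i, g ≤ |μ - lam i|
  sub_smul_mul_resolvent (i : ι) : (H - (lam i : ℂ) • 1) * R i = 1 - P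
  resolvent_mul_sub_smul (i : ι) : R i * (H - (lam i : ℂ) • 1) = 1 - P
  proj_mul_resolvent (i : ι) : P * R i = 0
  resolvent_mul_proj (i : ι) : R i * P = 0

namespace IsGappedSpectralProjection

variable {V ι : Type*} [NormedAddCommGroup V] [InnerProductSpace ℂ V] [FiniteDimensional ℂ V]
  [Fintype ι] {H P : V →L[ℂ] V} {lam : ι → ℝ} {Q R : ι → V →L[ℂ] V} {g : ℝ}
  (h : IsGappedSpectralProjection H P lam Q R g)
include h

theorem eigenproj_mul (i : ι) : Q i * H = (lam i : ℂ) • Q i := by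
  simpa [star_mul, h.isSelfAdjoint.star_eq, (h.isStarProjection_eigenproj i).isSelfAdjoint.star_eq]
    using congrArg star (h.mul_eigenproj i)

theorem pairwise_eigenproj_mul_eq_zero : Pairwise fun i j => Q i * Q j = 0 :=
  IsStarProjection.pairwise_mul_eq_zero_of_sum h.isStarProjection_eigenproj
    (h.eq_sum_eigenproj ▸ h.isStarProjection)

theorem proj_mul_eigenproj (i : ι) : P * Q i = Q i := by
  rw [h.eq_sum_eigenproj, sum_mul_of_pairwise_mul_eq_zero h.pairwise_eigenproj_mul_eq_zero i
    (h.isStarProjection_eigenproj i).isIdempotentElem]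

theorem eigenproj_mul_proj (i : ι) : Q i * P = Q i := by
  rw [h.eq_sum_eigenproj, mul_sum_of_pairwise_mul_eq_zero h.pairwise_eigenproj_mul_eq_zero i
    (h.isStarProjection_eigenproj i).isIdempotentElem]

theorem mul_norm_resolvent_apply_le (i : ι) (u : V) : g * ‖R i u‖ ≤ ‖u - P u‖ := by
  have hPR : P (R i u) = 0 := by rw [← mul_apply_eq_comp, h.proj_mul_resolvent, zero_apply]
  have hHR : H (R i u) - (lam i : ℂ) • R i u = u - P u := by
    simpa using congrArg (· u) (h.sub_smul_mul_resolvent i)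
  rw [← hHR]
  refine h.isSelfAdjoint.isSymmetric.mul_norm_le_norm_sub_smul fun μ v hv hμ => ?_
  by_cases hμlam : ∃ k, μ = lam k
  · obtain ⟨k, rfl⟩ := hμlam
    have hPv : P v = v := by
      rw [← h.eigenproj_apply_eq_self k v hv, ← mul_apply_eq_comp, h.proj_mul_eigenproj]
    rw [← hPv, h.isStarProjection.isSelfAdjoint.inner_apply_left, hPR, inner_zero_right]
  · by_contra hvw
    have hv0 : v ≠ 0 := by rintro rfl; simp at hvw
    exact (h.gap_le μ v hv0 hv (not_exists.mp hμlam) i).not_gt hμ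

theorem norm_twiddle_le (X : V →L[ℂ] V) :
    ‖twiddle Q R X‖ ≤ √(Fintype.card ι) * ‖X‖ / g :=
  _root_.norm_twiddle_le h.isStarProjection h.isStarProjection_eigenproj h.eq_sum_eigenproj
    h.mul_norm_resolvent_apply_le h.proj_mul_resolvent h.gap_pos

theorem eq_twiddle {H' P' : V →L[ℂ] V} (hcomm : H' * P + H * P' = P' * H + P * H')
    (hidem : P' * P + P * P' = P') : P' = twiddle Q R H' :=
  eq_twiddle_of_commute_deriv h.isStarProjection.isIdempotentElem h.eq_sum_eigenproj
    h.mul_eigenproj h.eigenproj_mul h.proj_mul_eigenproj h.eigenproj_mul_proj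
    h.sub_smul_mul_resolvent h.resolvent_mul_sub_smul h.proj_mul_resolvent
    h.resolvent_mul_proj hcomm hidem

end IsGappedSpectralProjection

theorem first_order_gap_bounds_general
    {V : Type*} [NormedAddCommGroup V] [InnerProductSpace ℂ V] [FiniteDimensional ℂ V]
    (m : ℕ)
    (H H' P P' : ℝ → V →L[ℂ] V)
    (lam : ℝ → Fin m → ℝ) (g : ℝ → ℝ)
    (Pj R : ℝ → Fin m → V →L[ℂ] V)
    (hHsa : ∀ s ∈ Set.Icc (0:ℝ) 1, IsSelfAdjoint (H s))
    (hH' : ∀ s ∈ Set.Icc (0:ℝ) 1, HasDerivAt H (H' s) s)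
    (hPsa : ∀ s ∈ Set.Icc (0:ℝ) 1, IsSelfAdjoint (P s))
    (hPidem : ∀ s ∈ Set.Icc (0:ℝ) 1, P s ∘L P s = P s)
    (hPH : ∀ s ∈ Set.Icc (0:ℝ) 1, H s ∘L P s = P s ∘L H s)
    (hP' : ∀ s ∈ Set.Icc (0:ℝ) 1, HasDerivAt P (P' s) s)
    (hPjsa : ∀ s ∈ Set.Icc (0:ℝ) 1, ∀ j, IsSelfAdjoint (Pj s j))
    (hPjidem : ∀ s ∈ Set.Icc (0:ℝ) 1, ∀ j, Pj s j ∘L Pj s j = Pj s j)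
    (hPjeig : ∀ s ∈ Set.Icc (0:ℝ) 1, ∀ j, H s ∘L Pj s j = (lam s j : ℂ) • Pj s j)
    (hPjfull : ∀ s ∈ Set.Icc (0:ℝ) 1, ∀ j, ∀ v : V,
      H s v = (lam s j : ℂ) • v → Pj s j v = v)
    (hPsum : ∀ s ∈ Set.Icc (0:ℝ) 1, P s = ∑ j, Pj s j)
    (hgpos : ∀ s ∈ Set.Icc (0:ℝ) 1, 0 < g s)
    (hgap : ∀ s ∈ Set.Icc (0:ℝ) 1, ∀ (μ : ℝ) (v : V), v ≠ 0 → H s v = (μ : ℂ) • v →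
      (∀ j, μ ≠ lam s j) → ∀ j, g s ≤ |μ - lam s j|)
    (hRl : ∀ s ∈ Set.Icc (0:ℝ) 1, ∀ j,
      (H s - (lam s j : ℂ) • 1) ∘L R s j = 1 - P s)
    (hRr : ∀ s ∈ Set.Icc (0:ℝ) 1, ∀ j,
      R s j ∘L (H s - (lam s j : ℂ) • 1) = 1 - P s)
    (hRP : ∀ s ∈ Set.Icc (0:ℝ) 1, ∀ j, P s ∘L R s j = 0 ∧ R s j ∘L P s = 0) :
    let TW : ℝ → (V →L[ℂ] V) → V →L[ℂ] V := fun s Z =>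
      -(∑ j, (Pj s j ∘L Z ∘L R s j + R s j ∘L Z ∘L Pj s j))
    ∀ s ∈ Set.Icc (0:ℝ) 1,
      ‖P' s‖ ≤ Real.sqrt m * ‖H' s‖ / g s ∧
      ‖TW s (P' s)‖ ≤ Real.sqrt m * ‖P' s‖ / g s ∧
      Real.sqrt m * ‖P' s‖ / g s ≤ (m : ℝ) * ‖H' s‖ / (g s) ^ 2 := by
  intro TW s hs
  have hS : IsGappedSpectralProjection (H s) (P s) (lam s) (Pj s) (R s) (g s) :=
    ⟨hHsa s hs, ⟨hPidem s hs, hPsa s hs⟩, fun j => ⟨hPjidem s hs j, hPjsa s hs j⟩,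
      hPjeig s hs, hPjfull s hs, hPsum s hs, hgpos s hs, hgap s hs, hRl s hs, hRr s hs,
      fun j => (hRP s hs j).1, fun j => (hRP s hs j).2⟩
  have hUD := uniqueDiffOn_Icc zero_lt_one s hs
  have hcomm := ((hH' s hs).mul (hP' s hs)).unique_of_eqOn ((hP' s hs).mul (hH' s hs)) hUD hs
    fun t ht => hPH t ht
  have hidem := ((hP' s hs).mul (hP' s hs)).unique_of_eqOn (hP' s hs) hUD hs
    fun t ht => hPidem t ht
  have hTW : ∀ X, ‖TW s X‖ ≤ √m * ‖X‖ / g s := fun X =>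
    Fintype.card_fin m ▸ hS.norm_twiddle_le X
  have hP's : ‖P' s‖ ≤ √m * ‖H' s‖ / g s := by
    rw [hS.eq_twiddle hcomm hidem]
    exact hTW (H' s)
  refine ⟨hP's, hTW (P' s), ?_⟩
  have hg := hgpos s hs
  calc √m * ‖P' s‖ / g s ≤ √m * (√m * ‖H' s‖ / g s) / g s := by gcongr
    _ = √m * √m * ‖H' s‖ / g s ^ 2 := by ring
    _ = m * ‖H' s‖ / g s ^ 2 := by rw [Real.mul_self_sqrt (Nat.cast_nonneg m)]

/-- **First-order gap bounds (Lemma 9, parts 1 and 2).**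

`H s` is a continuously differentiable family of self-adjoint operators (derivative
`H'`), `P s` a continuously differentiable family of orthogonal projections (derivative
`P'`) commuting with `H s`, equal to the sum of the spectral projections `Pj s j` of
`H s` onto the eigenvalues `lam s j`, with gap `g s > 0` to the rest of the spectrum.
`R s j` is the reduced resolvent of `H s` at `lam s j` (characterized by
`(H−λⱼ) R = R (H−λⱼ) = 1−P`, `P R = R P = 0`), and
`TW s X := −Σⱼ ( Pⱼ X R̂_{λⱼ} + R̂_{λⱼ} X Pⱼ )` the twiddle.

Then `‖Ṗ(s)‖ ≤ √m ‖Ḣ(s)‖ / g(s)` and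
`‖(Ṗ(s))~‖ ≤ √m ‖Ṗ(s)‖ / g(s) ≤ m ‖Ḣ(s)‖ / g(s)²`. -/
theorem first_order_gap_bounds
    {V : Type*} [NormedAddCommGroup V] [InnerProductSpace ℂ V] [FiniteDimensional ℂ V]
    (m : ℕ)
    (H H' P P' : ℝ → V →L[ℂ] V)
    (lam : ℝ → Fin m → ℝ) (g : ℝ → ℝ)
    (Pj R : ℝ → Fin m → V →L[ℂ] V)
    (hHsa : ∀ s ∈ Set.Icc (0:ℝ) 1, IsSelfAdjoint (H s))
    (hH' : ∀ s ∈ Set.Icc (0:ℝ) 1, HasDerivAt H (H' s) s)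
    (hH'c : ContinuousOn H' (Set.Icc (0:ℝ) 1))
    (hPsa : ∀ s ∈ Set.Icc (0:ℝ) 1, IsSelfAdjoint (P s))
    (hPidem : ∀ s ∈ Set.Icc (0:ℝ) 1, P s ∘L P s = P s)
    (hPH : ∀ s ∈ Set.Icc (0:ℝ) 1, H s ∘L P s = P s ∘L H s)
    (hP' : ∀ s ∈ Set.Icc (0:ℝ) 1, HasDerivAt P (P' s) s)
    (hP'c : ContinuousOn P' (Set.Icc (0:ℝ) 1))
    (hPjsa : ∀ s ∈ Set.Icc (0:ℝ) 1, ∀ j, IsSelfAdjoint (Pj s j))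
    (hPjidem : ∀ s ∈ Set.Icc (0:ℝ) 1, ∀ j, Pj s j ∘L Pj s j = Pj s j)
    (hPjne : ∀ s ∈ Set.Icc (0:ℝ) 1, ∀ j, Pj s j ≠ 0)
    (hPjeig : ∀ s ∈ Set.Icc (0:ℝ) 1, ∀ j, H s ∘L Pj s j = (lam s j : ℂ) • Pj s j)
    (hPjfull : ∀ s ∈ Set.Icc (0:ℝ) 1, ∀ j, ∀ v : V,
      H s v = (lam s j : ℂ) • v → Pj s j v = v)
    (hPsum : ∀ s ∈ Set.Icc (0:ℝ) 1, P s = ∑ j, Pj s j)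
    (hgpos : ∀ s ∈ Set.Icc (0:ℝ) 1, 0 < g s)
    (hgap : ∀ s ∈ Set.Icc (0:ℝ) 1, ∀ (μ : ℝ) (v : V), v ≠ 0 → H s v = (μ : ℂ) • v →
      (∀ j, μ ≠ lam s j) → ∀ j, g s ≤ |μ - lam s j|)
    (hRl : ∀ s ∈ Set.Icc (0:ℝ) 1, ∀ j,
      (H s - (lam s j : ℂ) • 1) ∘L R s j = 1 - P s)
    (hRr : ∀ s ∈ Set.Icc (0:ℝ) 1, ∀ j,
      R s j ∘L (H s - (lam s j : ℂ) • 1) = 1 - P s)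
    (hRP : ∀ s ∈ Set.Icc (0:ℝ) 1, ∀ j, P s ∘L R s j = 0 ∧ R s j ∘L P s = 0) :
    let TW : ℝ → (V →L[ℂ] V) → V →L[ℂ] V := fun s Z =>
      -(∑ j, (Pj s j ∘L Z ∘L R s j + R s j ∘L Z ∘L Pj s j))
    ∀ s ∈ Set.Icc (0:ℝ) 1,
      ‖P' s‖ ≤ Real.sqrt m * ‖H' s‖ / g s ∧
      ‖TW s (P' s)‖ ≤ Real.sqrt m * ‖P' s‖ / g s ∧
      Real.sqrt m * ‖P' s‖ / g s ≤ (m : ℝ) * ‖H' s‖ / (g s) ^ 2 :=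
  first_order_gap_bounds_general m H H' P P' lam g Pj R hHsa hH' hPsa hPidem hPH hP' hPjsa hPjidem
    hPjeig hPjfull hPsum hgpos hgap hRl hRr hRP
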